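/- arXiv:2504.10951 — 3 statements merged into one kernel-verified Lean document; each statement's English description precedes it below -/
import Mathlib

section
/- If f : ℝ → ℝ is differentiable with f(0) = 0 and f' is Lipschitz with constant L, then the function a defined by a(v) := f(v)/v for v ≠ 0 and a(0) := f'(0) is Lipschitz on ℝ with constant L/2. -/
/-!
Since `f 0 = 0`, the fundamental theorem of calculus writes `a` as an average of the derivative
along the segment from `0` to `v`: `a v = ∫ t in 0..1, f' (t * v)`, also at `v = 0`.
As `|f' (t * v) - f' (t * w)| ≤ L * t * |v - w|` and `∫ t in 0..1, t = 1 / 2`,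
the constant halves.
-/

open MeasureTheory Set intervalIntegral
open scoped NNReal

noncomputable def aF (f : ℝ → ℝ) (v : ℝ) : ℝ :=
  if v = 0 then deriv f 0 else f v / v

theorem LipschitzWith.intervalIntegral_comp_mul_right {E : Type*} [NormedAddCommGroup E]
    [NormedSpace ℝ E] {g : ℝ → E} {K : ℝ≥0} (hg : LipschitzWith K g) :
    LipschitzWith (K / 2) (fun v => ∫ t in (0 : ℝ)..1, g (t * v)) := by
  have hint : ∀ v : ℝ, IntervalIntegrable (fun t => g (t * v)) volume 0 1 := fun v =>
    (hg.continuous.comp (continuous_mul_const v)).intervalIntegrable 0 1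
  refine LipschitzWith.of_dist_le_mul fun v w => ?_
  have hpointwise : ∀ t ∈ Ioc (0 : ℝ) 1, ‖g (t * v) - g (t * w)‖ ≤ K * dist v w * t := by
    intro t ht
    calc ‖g (t * v) - g (t * w)‖ ≤ K * dist (t * v) (t * w) := by
          rw [← dist_eq_norm]; exact hg.dist_le_mul _ _
      _ = K * dist v w * t := by
          rw [Real.dist_eq, Real.dist_eq, ← mul_sub, abs_mul, abs_of_pos ht.1]; ring
  calc dist (∫ t in (0 : ℝ)..1, g (t * v)) (∫ t in (0 : ℝ)..1, g (t * w))
      = ‖∫ t in (0 : ℝ)..1, (g (t * v) - g (t * w))‖ := by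
        rw [dist_eq_norm, integral_sub (hint v) (hint w)]
    _ ≤ ∫ t in (0 : ℝ)..1, K * dist v w * t :=
        intervalIntegral.norm_integral_le_of_norm_le zero_le_one (ae_of_all _ hpointwise)
          ((continuous_const_mul _).intervalIntegrable 0 1)
    _ = ↑(K / 2) * dist v w := by
        rw [intervalIntegral.integral_const_mul, integral_id, NNReal.coe_div]; push_cast; ring

theorem aF_eq_integral_deriv {f : ℝ → ℝ} (hf : Differentiable ℝ f) (hf0 : f 0 = 0)
    (hf' : Continuous (deriv f)) (v : ℝ) :
    aF f v = ∫ t in (0 : ℝ)..1, deriv f (t * v) := by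
  by_cases hv : v = 0
  · simp [aF, hv]
  · rw [aF, if_neg hv, integral_comp_mul_right (deriv f) hv, zero_mul, one_mul,
      integral_deriv_eq_sub (fun x _ => hf x) (hf'.intervalIntegrable 0 v), hf0, sub_zero,
      smul_eq_mul, inv_mul_eq_div]

/-- If `f : ℝ → ℝ` is differentiable with `f(0) = 0` and `f'` is Lipschitz
with constant `L`, then `a(v) = f(v)/v` (with `a(0) = f'(0)`) is Lipschitz with constant `L/2`. -/
theorem aF_lipschitz (f : ℝ → ℝ) (hf : Differentiable ℝ f) (hf0 : f 0 = 0)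
    (L : ℝ≥0) (hL : LipschitzWith L (deriv f)) :
    LipschitzWith (L / 2) (aF f) := by
  rw [funext (aF_eq_integral_deriv hf hf0 hL.continuous)]
  exact hL.intervalIntegral_comp_mul_right
end

section
/- (Flux interpolation error.) Assume in addition that f is differentiable with f' Lipschitz with constant [f']_Lip. Let (x^i)_{i=1}^N, (v^i)_{i=1}^{N−1} be a solution of the particle system on (0, t'), and set Δx₀* := max_{1 ≤ i ≤ N−1} (x₀^{i+1} − x₀^i). Then for every t ∈ (0, t'): ∫_ℝ |A(x, t) v(x, t) − f(v(x, t))| dx ≤ [f']_Lip · v₀* · Δx₀* · Σ_{i=0}^{N−1} |v₀^{i+1} − v₀^i|. -/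
open MeasureTheory Set Filter
open scoped ENNReal NNReal

/-- The particle velocity `V(v_l, v_r)`: the minimum of `a` over `[v_l, v_r]` if
`v_l ≤ v_r`, and the maximum of `a` over `[v_r, v_l]` if `v_r ≤ v_l`. -/
noncomputable def pV (f : ℝ → ℝ) (vl vr : ℝ) : ℝ :=
  if vl ≤ vr then sInf (aF f '' Set.Icc vl vr) else sSup (aF f '' Set.Icc vr vl)

/-- A solution of the particle system `ẋ^i = V(v^{i-1}, v^i)`,
`v^i_t = v₀^i Δx₀^i / Δx^i_t` on the time interval `[0, t')`, with the conventions
`v⁰ ≡ 0`, `v^N ≡ 0`. -/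
structure IsParticleSol (f : ℝ → ℝ) (N : ℕ) (x₀ v₀ : ℕ → ℝ) (t' : ℝ)
    (x v : ℕ → ℝ → ℝ) : Prop where
  init : ∀ i, 1 ≤ i → i ≤ N → x i 0 = x₀ i
  cont : ∀ i, 1 ≤ i → i ≤ N → ContinuousOn (x i) (Set.Ico 0 t')
  order : ∀ t ∈ Set.Ioo (0:ℝ) t', ∀ i, 1 ≤ i → i < N → x i t < x (i+1) t
  vzero : ∀ t, v 0 t = 0
  vN : ∀ t, v N t = 0
  ode : ∀ i, 1 ≤ i → i ≤ N → ∀ t ∈ Set.Ioo (0:ℝ) t',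
    HasDerivAt (x i) (pV f (v (i-1) t) (v i t)) t
  mass : ∀ i, 1 ≤ i → i < N → ∀ t ∈ Set.Ico (0:ℝ) t',
    v i t = v₀ i * (x₀ (i+1) - x₀ i) / (x (i+1) t - x i t)

/-- `v₀* = max_{1 ≤ i ≤ N-1} v₀^i`. -/
noncomputable def vstar (N : ℕ) (v₀ : ℕ → ℝ) : ℝ :=
  sSup {r | ∃ i, 1 ≤ i ∧ i ≤ N - 1 ∧ r = v₀ i}

/-- `a_min = min_{v ∈ [0, v₀*]} a(v)`. -/
noncomputable def aMin (f : ℝ → ℝ) (N : ℕ) (v₀ : ℕ → ℝ) : ℝ :=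
  sInf (aF f '' Set.Icc 0 (vstar N v₀))

/-- `a_max = max_{v ∈ [0, v₀*]} a(v)`. -/
noncomputable def aMax (f : ℝ → ℝ) (N : ℕ) (v₀ : ℕ → ℝ) : ℝ :=
  sSup (aF f '' Set.Icc 0 (vstar N v₀))

/-- `Δx₀* = max_{1 ≤ i ≤ N-1} (x₀^{i+1} - x₀^i)`. -/
noncomputable def maxGap (N : ℕ) (x₀ : ℕ → ℝ) : ℝ :=
  sSup {r | ∃ i, 1 ≤ i ∧ i ≤ N - 1 ∧ r = x₀ (i+1) - x₀ i}

open Topology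

/-!
Since `f 0 = 0` and `f'` is `L'`-Lipschitz, `a v = ∫₀¹ f' (s v) ds` is `L'/2`-Lipschitz, and a
particle velocity `V(v_l, v_r)` is a value of `a` between `v_l` and `v_r`; so it differs from
both `a v_l` and `a v_r` by at most `L'/2 · |v_r - v_l|`. On the cell `(x^i, x^{i+1})` the
integrand is `|A - a(v^i)| · v^i`, hence at most `v^i · L'/2 · (|v^i - v^{i-1}| + |v^{i+1} - v^i|)`,
and `v^i Δx^i = v₀^i Δx₀^i ≤ v₀* Δx₀*`. Summing over the cells, where each difference occurs at
most twice, bounds the integral by `L' v₀* Δx₀*` times the total variation of `(v^i_t)_i`. This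
does not increase in time: interior local maxima of `i ↦ v^i` decrease and local minima
increase, so the right derivative of `∑ |v^{i+1} - v^i|` is nonpositive.
-/

section VelocityField

variable {f : ℝ → ℝ}

theorem aF_mul_self (hf0 : f 0 = 0) (u : ℝ) : aF f u * u = f u := by
  rcases eq_or_ne u 0 with rfl | hu
  · simp [hf0]
  · simp [aF, hu]

theorem aF_eq_integral (hfd : Differentiable ℝ f) (hf' : Continuous (deriv f)) (hf0 : f 0 = 0)
    (u : ℝ) : aF f u = ∫ s in (0 : ℝ)..1, deriv f (s * u) := by
  rcases eq_or_ne u 0 with rfl | hu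
  · simp [aF]
  · rw [intervalIntegral.integral_comp_mul_right _ hu,
      intervalIntegral.integral_deriv_eq_sub (fun x _ => hfd x) (hf'.intervalIntegrable _ _)]
    simp [aF, hu, hf0, div_eq_inv_mul]

theorem lipschitzWith_aF {L : ℝ≥0} (hfd : Differentiable ℝ f) (hL : LipschitzWith L (deriv f))
    (hf0 : f 0 = 0) : LipschitzWith (L / 2) (aF f) := by
  refine LipschitzWith.of_dist_le_mul fun u w => ?_
  have hint : ∀ u : ℝ, IntervalIntegrable (fun s => deriv f (s * u)) volume 0 1 := fun u =>
    (hL.continuous.comp (continuous_mul_const u)).intervalIntegrable _ _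
  have hbound : ∀ s ∈ Ioc (0 : ℝ) 1,
      ‖deriv f (s * u) - deriv f (s * w)‖ ≤ L * dist u w * s := fun s hs => by
    calc ‖deriv f (s * u) - deriv f (s * w)‖ ≤ L * dist (s * u) (s * w) := hL.dist_le_mul _ _
      _ = L * dist u w * s := by
        rw [Real.dist_eq, Real.dist_eq, ← mul_sub, abs_mul, abs_of_pos hs.1]; ring
  rw [Real.dist_eq, aF_eq_integral hfd hL.continuous hf0, aF_eq_integral hfd hL.continuous hf0,
    ← intervalIntegral.integral_sub (hint u) (hint w), ← Real.norm_eq_abs]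
  refine (intervalIntegral.norm_integral_le_of_norm_le zero_le_one
    (ae_of_all _ hbound) ((continuous_const_mul _).intervalIntegrable _ _)).trans_eq ?_
  rw [intervalIntegral.integral_const_mul, integral_id]
  push_cast
  ring

end VelocityField

section ParticleVelocity

variable {f : ℝ → ℝ} (hc : Continuous (aF f))
include hc

theorem bddBelow_aF_image (p q : ℝ) : BddBelow (aF f '' Icc p q) :=
  (isCompact_Icc.image hc).bddBelow

theorem bddAbove_aF_image (p q : ℝ) : BddAbove (aF f '' Icc p q) :=
  (isCompact_Icc.image hc).bddAbove

theorem pV_le_aF_left {p q : ℝ} (h : p ≤ q) : pV f p q ≤ aF f p := by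
  rw [pV, if_pos h]
  exact csInf_le (bddBelow_aF_image hc p q) (mem_image_of_mem _ (left_mem_Icc.2 h))

theorem pV_le_aF_right {p q : ℝ} (h : p ≤ q) : pV f p q ≤ aF f q := by
  rw [pV, if_pos h]
  exact csInf_le (bddBelow_aF_image hc p q) (mem_image_of_mem _ (right_mem_Icc.2 h))

theorem aF_left_le_pV {p q : ℝ} (h : q ≤ p) : aF f p ≤ pV f p q := by
  rcases h.eq_or_lt with rfl | h
  · simp [pV]
  rw [pV, if_neg h.not_ge]
  exact le_csSup (bddAbove_aF_image hc q p) (mem_image_of_mem _ (right_mem_Icc.2 h.le))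

theorem aF_right_le_pV {p q : ℝ} (h : q ≤ p) : aF f q ≤ pV f p q := by
  rcases h.eq_or_lt with rfl | h
  · simp [pV]
  rw [pV, if_neg h.not_ge]
  exact le_csSup (bddAbove_aF_image hc q p) (mem_image_of_mem _ (left_mem_Icc.2 h.le))

theorem exists_mem_uIcc_pV_eq (p q : ℝ) : ∃ ξ ∈ uIcc p q, pV f p q = aF f ξ := by
  rcases le_total p q with h | h
  · obtain ⟨ξ, hξ, hval⟩ := (isCompact_Icc.image hc).sInf_mem ((nonempty_Icc.2 h).image _)
    exact ⟨ξ, Icc_subset_uIcc hξ, by rw [pV, if_pos h, hval]⟩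
  · obtain ⟨ξ, hξ, hval⟩ := (isCompact_Icc.image hc).sSup_mem ((nonempty_Icc.2 h).image _)
    refine ⟨ξ, Icc_subset_uIcc' hξ, ?_⟩
    rcases h.eq_or_lt with rfl | h'
    · simp_all [pV]
    · rw [pV, if_neg h'.not_ge, hval]

end ParticleVelocity

section Interpolation

variable {f : ℝ → ℝ} {K : ℝ≥0} (hK : LipschitzWith K (aF f))
include hK

theorem abs_pV_sub_aF_left_le (p q : ℝ) : |pV f p q - aF f p| ≤ K * |q - p| := by
  obtain ⟨ξ, hξ, hval⟩ := exists_mem_uIcc_pV_eq hK.continuous p q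
  rw [hval, ← Real.dist_eq, ← Real.dist_eq, dist_comm q]
  refine (hK.dist_le_mul ξ p).trans ?_
  gcongr
  exact dist_comm ξ p ▸ Real.dist_left_le_of_mem_uIcc hξ

theorem abs_pV_sub_aF_right_le (p q : ℝ) : |pV f p q - aF f q| ≤ K * |q - p| := by
  obtain ⟨ξ, hξ, hval⟩ := exists_mem_uIcc_pV_eq hK.continuous p q
  rw [hval, ← Real.dist_eq, ← Real.dist_eq, dist_comm q]
  exact (hK.dist_le_mul ξ q).trans (by gcongr; exact Real.dist_right_le_of_mem_uIcc hξ)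

theorem abs_interp_pV_mul_sub_le (hf0 : f 0 = 0) {a b y vl vm vr : ℝ} (hab : a < b)
    (hy : y ∈ Icc a b) :
    |((b - y) * pV f vl vm + (y - a) * pV f vm vr) / (b - a) * vm - f vm| ≤
      |vm| * (K * (|vm - vl| + |vr - vm|)) := by
  set e₁ := pV f vl vm - aF f vm
  set e₂ := pV f vm vr - aF f vm
  have hba : 0 < b - a := sub_pos.2 hab
  have hw₁ : 0 ≤ (b - y) / (b - a) := div_nonneg (sub_nonneg.2 hy.2) hba.le
  have hw₂ : 0 ≤ (y - a) / (b - a) := div_nonneg (sub_nonneg.2 hy.1) hba.le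
  have hw : (b - y) / (b - a) + (y - a) / (b - a) = 1 := by field_simp; ring
  have hsplit : ((b - y) * pV f vl vm + (y - a) * pV f vm vr) / (b - a) * vm - f vm =
      ((b - y) / (b - a) * e₁ + (y - a) / (b - a) * e₂) * vm := by
    rw [← aF_mul_self hf0 vm]
    field_simp
    ring
  have he₁ : |e₁| ≤ K * |vm - vl| := abs_pV_sub_aF_right_le hK vl vm
  have he₂ : |e₂| ≤ K * |vr - vm| := abs_pV_sub_aF_left_le hK vm vr
  rw [hsplit, abs_mul, mul_comm]
  gcongr
  calc |(b - y) / (b - a) * e₁ + (y - a) / (b - a) * e₂|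
      ≤ (b - y) / (b - a) * |e₁| + (y - a) / (b - a) * |e₂| := by
        refine (abs_add_le _ _).trans_eq ?_
        rw [abs_mul, abs_mul, abs_of_nonneg hw₁, abs_of_nonneg hw₂]
    _ ≤ |e₁| + |e₂| := by nlinarith [abs_nonneg e₁, abs_nonneg e₂]
    _ ≤ K * (|vm - vl| + |vr - vm|) := by rw [mul_add]; exact add_le_add he₁ he₂

end Interpolation

theorem HasDerivAt.hasDerivWithinAt_abs_Ici_of_eq_zero {g : ℝ → ℝ} {g' r : ℝ}
    (hg : HasDerivAt g g' r) (h0 : g r = 0) :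
    HasDerivWithinAt (fun z => |g z|) |g'| (Ici r) r := by
  have hg' := (hasDerivWithinAt_iff_isLittleO.1 (hg.hasDerivWithinAt (s := Ici r)))
  rw [hasDerivWithinAt_iff_isLittleO]
  refine (Asymptotics.IsBigO.of_bound' ?_).trans_isLittleO hg'
  filter_upwards [self_mem_nhdsWithin] with z (hz : r ≤ z)
  rw [h0, abs_zero, sub_zero, sub_zero, smul_eq_mul, smul_eq_mul, Real.norm_eq_abs,
    Real.norm_eq_abs, ← abs_of_nonneg (sub_nonneg.2 hz), ← abs_mul, abs_of_nonneg (sub_nonneg.2 hz)]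
  exact abs_abs_sub_abs_le_abs_sub _ _

theorem HasDerivAt.exists_sign_hasDerivWithinAt_abs_Ici {g : ℝ → ℝ} {g' r : ℝ}
    (hg : HasDerivAt g g' r) :
    ∃ σ : ℝ, ((σ = 1 ∧ 0 ≤ g r) ∨ (σ = -1 ∧ g r ≤ 0)) ∧
      HasDerivWithinAt (fun z => |g z|) (σ * g') (Ici r) r := by
  rcases lt_trichotomy (g r) 0 with hneg | hzero | hpos
  · exact ⟨-1, .inr ⟨rfl, hneg.le⟩, ((hasDerivAt_abs_neg hneg).comp r hg).hasDerivWithinAt⟩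
  · rcases le_total 0 g' with hd | hd
    · refine ⟨1, .inl ⟨rfl, hzero.ge⟩, ?_⟩
      simpa [abs_of_nonneg hd] using hg.hasDerivWithinAt_abs_Ici_of_eq_zero hzero
    · refine ⟨-1, .inr ⟨rfl, hzero.le⟩, ?_⟩
      simpa [abs_of_nonpos hd] using hg.hasDerivWithinAt_abs_Ici_of_eq_zero hzero
  · exact ⟨1, .inl ⟨rfl, hpos.le⟩, ((hasDerivAt_abs_pos hpos).comp r hg).hasDerivWithinAt⟩

theorem le_of_forall_hasDerivWithinAt_Ici_nonpos {φ : ℝ → ℝ} {a b : ℝ} (hab : a ≤ b)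
    (hφ : ContinuousOn φ (Icc a b))
    (hφ' : ∀ r ∈ Ioo a b, ∃ d ≤ 0, HasDerivWithinAt φ d (Ici r) r) : φ b ≤ φ a := by
  rcases hab.eq_or_lt with rfl | hab
  · rfl
  choose! φ' hφ'_nonpos hφ' using hφ'
  have hle : ∀ s ∈ Ioo a b, φ b ≤ φ s := fun s hs =>
    image_le_of_deriv_right_le_deriv_boundary (B := fun _ => φ s)
      (hφ.mono (Icc_subset_Icc_left hs.1.le)) (fun r hr => hφ' r ⟨hs.1.trans_le hr.1, hr.2⟩)
      le_rfl continuousOn_const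
      (fun r _ => hasDerivWithinAt_const r _ (φ s))
      (fun r hr => hφ'_nonpos r ⟨hs.1.trans_le hr.1, hr.2⟩) (right_mem_Icc.2 hs.2.le)
  have hlim : Tendsto φ (𝓝[>] a) (𝓝 (φ a)) :=
    ((hφ a (left_mem_Icc.2 hab.le)).mono_of_mem_nhdsWithin (Icc_mem_nhdsGT hab)).tendsto
  exact ge_of_tendsto hlim (Filter.mem_of_superset (Ioo_mem_nhdsGT hab) hle)

theorem sum_range_mul_sub_eq_of_eq_zero {M : ℕ} (σ U : ℕ → ℝ) (hU0 : U 0 = 0)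
    (hUM : U (M + 1) = 0) :
    ∑ i ∈ Finset.range (M + 1), σ i * (U (i + 1) - U i) =
      ∑ j ∈ Finset.range M, (σ j - σ (j + 1)) * U (j + 1) := by
  simp only [mul_sub, Finset.sum_sub_distrib]
  rw [Finset.sum_range_succ (fun i => σ i * U (i + 1)), Finset.sum_range_succ' (fun i => σ i * U i),
    hU0, hUM]
  simp only [mul_zero, add_zero, sub_mul, Finset.sum_sub_distrib]

theorem sum_sign_mul_sub_nonpos {N : ℕ} {u U σ : ℕ → ℝ} (hU0 : U 0 = 0) (hUN : U N = 0)
    (hσ : ∀ i < N, (σ i = 1 ∧ 0 ≤ u (i + 1) - u i) ∨ (σ i = -1 ∧ u (i + 1) - u i ≤ 0))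
    (hmax : ∀ j, j + 1 < N → u j ≤ u (j + 1) → u (j + 2) ≤ u (j + 1) → U (j + 1) ≤ 0)
    (hmin : ∀ j, j + 1 < N → u (j + 1) ≤ u j → u (j + 1) ≤ u (j + 2) → 0 ≤ U (j + 1)) :
    ∑ i ∈ Finset.range N, σ i * (U (i + 1) - U i) ≤ 0 := by
  obtain _ | M := N
  · simp
  rw [sum_range_mul_sub_eq_of_eq_zero σ U hU0 hUN]
  refine Finset.sum_nonpos fun j hj => ?_
  have hj : j + 1 < M + 1 := by simpa using hj
  rcases hσ j (by omega) with ⟨h₁, hu₁⟩ | ⟨h₁, hu₁⟩ <;>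
    rcases hσ (j + 1) hj with ⟨h₂, hu₂⟩ | ⟨h₂, hu₂⟩ <;> rw [h₁, h₂]
  · simp
  · linarith [hmax j hj (sub_nonneg.1 hu₁) (sub_nonpos.1 hu₂)]
  · linarith [hmin j hj (sub_nonpos.1 hu₁) (sub_nonneg.1 hu₂)]
  · simp

theorem sum_Ico_abs_sub_add_abs_sub_le (N : ℕ) (u : ℕ → ℝ) :
    ∑ i ∈ Finset.Ico 1 N, (|u i - u (i - 1)| + |u (i + 1) - u i|) ≤
      2 * ∑ i ∈ Finset.range N, |u (i + 1) - u i| := by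
  have hsub : Finset.Ico 1 N ⊆ Finset.range N := fun i hi => by
    simp only [Finset.mem_Ico, Finset.mem_range] at hi ⊢; omega
  have hleft : ∑ i ∈ Finset.Ico 1 N, |u i - u (i - 1)| ≤
      ∑ i ∈ Finset.range N, |u (i + 1) - u i| := by
    rcases Nat.eq_zero_or_pos N with rfl | hN
    · simp
    rw [Finset.sum_Ico_eq_sum_range, ← Nat.sub_add_cancel hN, Finset.sum_range_succ _ (N - 1)]
    simp only [Nat.add_sub_cancel_left]
    exact le_add_of_le_of_nonneg (by simp [add_comm]) (abs_nonneg _)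
  rw [Finset.sum_add_distrib, two_mul]
  exact add_le_add hleft
    (Finset.sum_le_sum_of_subset_of_nonneg hsub fun _ _ _ => abs_nonneg _)

theorem exists_mem_Ico_of_le_of_lt {α : Type*} [LinearOrder α] {ξ : ℕ → α} {y : α}
    (h₁ : ξ 1 ≤ y) : ∀ n, y < ξ (n + 1) → ∃ i, 1 ≤ i ∧ i ≤ n ∧ y ∈ Ico (ξ i) (ξ (i + 1))
  | 0, h => absurd h h₁.not_gt
  | n + 1, h => by
    by_cases hn : y < ξ (n + 1)
    · obtain ⟨i, hi₁, hin, hy⟩ := exists_mem_Ico_of_le_of_lt h₁ n hn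
      exact ⟨i, hi₁, by omega, hy⟩
    · exact ⟨n + 1, by omega, le_rfl, not_lt.1 hn, h⟩

theorem integral_le_sum_of_le_on_Ioo {g : ℝ → ℝ} {ξ C : ℕ → ℝ} {N : ℕ} (hN : 1 ≤ N)
    (hg : 0 ≤ g) (hξ : ∀ i, 1 ≤ i → i < N → ξ i < ξ (i + 1))
    (hout : ∀ y, y < ξ 1 ∨ ξ N < y → g y = 0)
    (hcell : ∀ i, 1 ≤ i → i < N → ∀ y ∈ Ioo (ξ i) (ξ (i + 1)), g y ≤ C i) :
    ∫ y, g y ≤ ∑ i ∈ Finset.Ico 1 N, C i * (ξ (i + 1) - ξ i) := by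
  have hC : ∀ i ∈ Finset.Ico 1 N, 0 ≤ C i := fun i hi => by
    obtain ⟨hi₁, hiN⟩ := Finset.mem_Ico.1 hi
    obtain ⟨y, hy⟩ := exists_between (hξ i hi₁ hiN)
    exact (hg y).trans (hcell i hi₁ hiN y hy)
  set G : ℝ → ℝ := fun y => ∑ i ∈ Finset.Ico 1 N, (Ioo (ξ i) (ξ (i + 1))).indicator (fun _ => C i) y
  have hG : 0 ≤ G := fun y => Finset.sum_nonneg fun i hi => indicator_nonneg (fun _ _ => hC i hi) y
  have hgG : g ≤ᵐ[volume] G := by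
    filter_upwards [((Finset.finite_toSet (Finset.Icc 1 N)).image ξ).countable.ae_notMem volume]
      with y hy
    by_cases hy' : y < ξ 1 ∨ ξ N < y
    · rw [hout y hy']
      exact hG y
    push Not at hy'
    have hyN : y < ξ N := hy'.2.lt_of_ne fun h => hy ⟨N, by simp [hN], h.symm⟩
    obtain ⟨i, hi₁, hiN, hyi⟩ :=
      exists_mem_Ico_of_le_of_lt hy'.1 (N - 1) (by rwa [Nat.sub_add_cancel hN])
    have hi : i ∈ Finset.Ico 1 N := Finset.mem_Ico.2 ⟨hi₁, by omega⟩
    have hyi' : y ∈ Ioo (ξ i) (ξ (i + 1)) :=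
      ⟨hyi.1.lt_of_ne fun h => hy ⟨i, by simp [hi₁]; omega, h⟩, hyi.2⟩
    calc g y ≤ (Ioo (ξ i) (ξ (i + 1))).indicator (fun _ => C i) y := by
          rw [indicator_of_mem hyi']; exact hcell i hi₁ (by omega) y hyi'
      _ ≤ G y := Finset.single_le_sum
          (f := fun i => (Ioo (ξ i) (ξ (i + 1))).indicator (fun _ => C i) y)
          (fun j hj => indicator_nonneg (fun _ _ => hC j hj) y) hi
  have hint : ∀ i ∈ Finset.Ico 1 N, Integrable ((Ioo (ξ i) (ξ (i + 1))).indicator fun _ => C i) :=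
    fun i _ => (integrable_indicator_iff measurableSet_Ioo).2
      (integrableOn_const measure_Ioo_lt_top.ne)
  calc ∫ y, g y ≤ ∫ y, G y :=
        integral_mono_of_nonneg (ae_of_all _ hg) (integrable_finsetSum _ hint) hgG
    _ = ∑ i ∈ Finset.Ico 1 N, C i * (ξ (i + 1) - ξ i) := by
      rw [integral_finsetSum _ hint]
      refine Finset.sum_congr rfl fun i hi => ?_
      obtain ⟨hi₁, hiN⟩ := Finset.mem_Ico.1 hi
      rw [integral_indicator_const _ measurableSet_Ioo,
        Real.volume_real_Ioo_of_le (hξ i hi₁ hiN).le, smul_eq_mul, mul_comm]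

noncomputable def vRate (f : ℝ → ℝ) (x v : ℕ → ℝ → ℝ) (i : ℕ) (s : ℝ) : ℝ :=
  -(v i s * (pV f (v i s) (v (i + 1) s) - pV f (v (i - 1) s) (v i s)) / (x (i + 1) s - x i s))

section Rate

variable {f : ℝ → ℝ} (hc : Continuous (aF f)) {x v : ℕ → ℝ → ℝ} {i : ℕ} {s : ℝ}
include hc

theorem vRate_nonpos (hv : 0 ≤ v i s) (hx : x i s ≤ x (i + 1) s) (hl : v (i - 1) s ≤ v i s)
    (hr : v (i + 1) s ≤ v i s) : vRate f x v i s ≤ 0 :=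
  neg_nonpos.2 <| div_nonneg (mul_nonneg hv <| sub_nonneg.2 <|
    (pV_le_aF_right hc hl).trans (aF_left_le_pV hc hr)) (sub_nonneg.2 hx)

theorem vRate_nonneg (hv : 0 ≤ v i s) (hx : x i s ≤ x (i + 1) s) (hl : v i s ≤ v (i - 1) s)
    (hr : v i s ≤ v (i + 1) s) : 0 ≤ vRate f x v i s :=
  neg_nonneg.2 <| div_nonpos_of_nonpos_of_nonneg (mul_nonpos_of_nonneg_of_nonpos hv <|
    sub_nonpos.2 <| (pV_le_aF_left hc hr).trans (aF_right_le_pV hc hl)) (sub_nonneg.2 hx)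

end Rate

namespace IsParticleSol

variable {f : ℝ → ℝ} {N : ℕ} {x₀ v₀ : ℕ → ℝ} {t' : ℝ} {x v : ℕ → ℝ → ℝ}
  (hsol : IsParticleSol f N x₀ v₀ t' x v) (hx₀ : ∀ i, 1 ≤ i → i < N → x₀ i < x₀ (i + 1))
include hsol hx₀

theorem gap_pos {i : ℕ} (hi₁ : 1 ≤ i) (hiN : i < N) {s : ℝ} (hs : s ∈ Ico 0 t') :
    x i s < x (i + 1) s := by
  rcases hs.1.eq_or_lt with rfl | hs₀
  · rw [hsol.init i hi₁ hiN.le, hsol.init (i + 1) (by omega) hiN]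
    exact hx₀ i hi₁ hiN
  · exact hsol.order s ⟨hs₀, hs.2⟩ i hi₁ hiN

theorem v_nonneg (hv₀nn : ∀ i, 1 ≤ i → i < N → 0 ≤ v₀ i) {i : ℕ} (hiN : i ≤ N) {s : ℝ}
    (hs : s ∈ Ico 0 t') : 0 ≤ v i s := by
  rcases Nat.eq_zero_or_pos i with rfl | hi₁
  · rw [hsol.vzero]
  rcases hiN.eq_or_lt with rfl | hiN
  · rw [hsol.vN]
  rw [hsol.mass i hi₁ hiN s hs]
  exact div_nonneg (mul_nonneg (hv₀nn i hi₁ hiN) (sub_nonneg.2 (hx₀ i hi₁ hiN).le))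
    (sub_nonneg.2 (hsol.gap_pos hx₀ hi₁ hiN hs).le)

theorem v_zero (hv₀0 : v₀ 0 = 0) (hv₀N : v₀ N = 0) (ht' : 0 < t') {i : ℕ} (hiN : i ≤ N) :
    v i 0 = v₀ i := by
  rcases Nat.eq_zero_or_pos i with rfl | hi₁
  · rw [hsol.vzero, hv₀0]
  rcases hiN.eq_or_lt with rfl | hiN
  · rw [hsol.vN, hv₀N]
  rw [hsol.mass i hi₁ hiN 0 ⟨le_rfl, ht'⟩, hsol.init i hi₁ hiN.le, hsol.init (i + 1) (by omega) hiN,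
    mul_div_cancel_right₀ _ (sub_pos.2 (hx₀ i hi₁ hiN)).ne']

theorem continuousOn_v {i : ℕ} (hiN : i ≤ N) : ContinuousOn (v i) (Ico 0 t') := by
  rcases Nat.eq_zero_or_pos i with rfl | hi₁
  · rw [funext hsol.vzero]; exact continuousOn_const
  rcases hiN.eq_or_lt with rfl | hiN
  · rw [funext hsol.vN]; exact continuousOn_const
  refine (continuousOn_const.div ((hsol.cont (i + 1) (by omega) hiN).sub
    (hsol.cont i hi₁ hiN.le)) fun s hs => (sub_pos.2 (hsol.gap_pos hx₀ hi₁ hiN hs)).ne').congr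
    fun s hs => hsol.mass i hi₁ hiN s hs

theorem hasDerivAt_v {i : ℕ} (hiN : i ≤ N) {s : ℝ} (hs : s ∈ Ioo 0 t') :
    HasDerivAt (v i) (vRate f x v i s) s := by
  rcases Nat.eq_zero_or_pos i with rfl | hi₁
  · simpa [vRate, hsol.vzero, funext hsol.vzero] using hasDerivAt_const s (0 : ℝ)
  rcases hiN.eq_or_lt with rfl | hiN
  · simpa [vRate, hsol.vN, funext hsol.vN] using hasDerivAt_const s (0 : ℝ)
  have hs' : s ∈ Ico 0 t' := Ioo_subset_Ico_self hs
  have hgap : x (i + 1) s - x i s ≠ 0 := (sub_pos.2 (hsol.gap_pos hx₀ hi₁ hiN hs')).ne'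
  have hmass : v i =ᶠ[𝓝 s] fun r => v₀ i * (x₀ (i + 1) - x₀ i) / (x (i + 1) r - x i r) :=
    Filter.mem_of_superset (isOpen_Ioo.mem_nhds hs) fun r hr =>
      hsol.mass i hi₁ hiN r (Ioo_subset_Ico_self hr)
  refine ((hasDerivAt_const s _).fun_div ((hsol.ode (i + 1) (by omega) hiN s hs).fun_sub
    (hsol.ode i hi₁ hiN.le s hs)) hgap).congr_of_eventuallyEq hmass |>.congr_deriv ?_
  rw [vRate, Nat.add_sub_cancel]
  generalize pV f (v i s) (v (i + 1) s) - pV f (v (i - 1) s) (v i s) = dV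
  rw [hsol.mass i hi₁ hiN s hs']
  field_simp
  ring

theorem sum_abs_sub_le (hc : Continuous (aF f)) (hv₀nn : ∀ i, 1 ≤ i → i < N → 0 ≤ v₀ i)
    (hv₀0 : v₀ 0 = 0) (hv₀N : v₀ N = 0) {t : ℝ} (ht : t ∈ Ioo 0 t') :
    ∑ i ∈ Finset.range N, |v (i + 1) t - v i t| ≤ ∑ i ∈ Finset.range N, |v₀ (i + 1) - v₀ i| := by
  have hIcc : Icc 0 t ⊆ Ico 0 t' := Icc_subset_Ico_right ht.2
  have hTV := le_of_forall_hasDerivWithinAt_Ici_nonpos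
    (φ := fun s => ∑ i ∈ Finset.range N, |v (i + 1) s - v i s|) ht.1.le ?_ ?_
  · refine hTV.trans_eq (Finset.sum_congr rfl fun i hi => ?_)
    have hi : i < N := Finset.mem_range.1 hi
    rw [hsol.v_zero hx₀ hv₀0 hv₀N (ht.1.trans ht.2) hi,
      hsol.v_zero hx₀ hv₀0 hv₀N (ht.1.trans ht.2) hi.le]
  · refine continuousOn_finsetSum _ fun i hi => ?_
    have hi : i < N := Finset.mem_range.1 hi
    exact ((hsol.continuousOn_v hx₀ hi).sub (hsol.continuousOn_v hx₀ hi.le)).abs.mono hIcc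
  intro r hr
  have hr' : r ∈ Ioo 0 t' := ⟨hr.1, hr.2.trans ht.2⟩
  have hrI : r ∈ Ico 0 t' := Ioo_subset_Ico_self hr'
  choose! σ hσ hderiv using fun i (hi : i < N) =>
    ((hsol.hasDerivAt_v hx₀ hi hr').sub
      (hsol.hasDerivAt_v hx₀ hi.le hr')).exists_sign_hasDerivWithinAt_abs_Ici
  refine ⟨_, sum_sign_mul_sub_nonpos (u := fun i => v i r) (U := fun i => vRate f x v i r)
    ?_ ?_ hσ ?_ ?_, HasDerivWithinAt.fun_sum fun i hi => hderiv i (Finset.mem_range.1 hi)⟩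
  · simp [vRate, hsol.vzero]
  · simp [vRate, hsol.vN]
  · intro j hj hl hr
    exact vRate_nonpos hc (hsol.v_nonneg hx₀ hv₀nn hj.le hrI)
      (hsol.gap_pos hx₀ (by omega) hj hrI).le (by simpa using hl) hr
  · intro j hj hl hr
    exact vRate_nonneg hc (hsol.v_nonneg hx₀ hv₀nn hj.le hrI)
      (hsol.gap_pos hx₀ (by omega) hj hrI).le (by simpa using hl) hr

end IsParticleSol

theorem le_sSup_of_mem_Icc (g : ℕ → ℝ) {n i : ℕ} (hi₁ : 1 ≤ i) (hin : i ≤ n) :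
    g i ≤ sSup {r | ∃ i, 1 ≤ i ∧ i ≤ n ∧ r = g i} :=
  le_csSup (((Set.finite_Icc 1 n).image g).bddAbove.mono
    (by rintro _ ⟨j, hj₁, hjn, rfl⟩; exact ⟨j, ⟨hj₁, hjn⟩, rfl⟩)) ⟨i, hi₁, hin, rfl⟩

section MassBounds

variable {N : ℕ} {x₀ v₀ : ℕ → ℝ} (hx₀ : ∀ i, 1 ≤ i → i < N → x₀ i < x₀ (i + 1))
  (hv₀nn : ∀ i, 1 ≤ i → i < N → 0 ≤ v₀ i)
include hx₀ hv₀nn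

theorem mul_le_vstar_mul_maxGap {i : ℕ} (hi₁ : 1 ≤ i) (hiN : i < N) :
    v₀ i * (x₀ (i + 1) - x₀ i) ≤ vstar N v₀ * maxGap N x₀ :=
  mul_le_mul (le_sSup_of_mem_Icc v₀ hi₁ (by omega))
    (le_sSup_of_mem_Icc (fun i => x₀ (i + 1) - x₀ i) hi₁ (by omega))
    (sub_nonneg.2 (hx₀ i hi₁ hiN).le)
    ((hv₀nn i hi₁ hiN).trans (le_sSup_of_mem_Icc v₀ hi₁ (by omega)))

theorem vstar_mul_maxGap_nonneg (hN : 2 ≤ N) : 0 ≤ vstar N v₀ * maxGap N x₀ :=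
  (mul_nonneg (hv₀nn 1 le_rfl (by omega)) (sub_nonneg.2 (hx₀ 1 le_rfl (by omega)).le)).trans
    (mul_le_vstar_mul_maxGap hx₀ hv₀nn le_rfl (by omega))

theorem IsParticleSol.sum_abs_mul_mul_gap_le {f : ℝ → ℝ} {t' : ℝ} {x v : ℕ → ℝ → ℝ}
    (hsol : IsParticleSol f N x₀ v₀ t' x v) {t : ℝ} (ht : t ∈ Ico 0 t') {c : ℕ → ℝ}
    (hc : ∀ i, 0 ≤ c i) :
    ∑ i ∈ Finset.Ico 1 N, |v i t| * c i * (x (i + 1) t - x i t) ≤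
      vstar N v₀ * maxGap N x₀ * ∑ i ∈ Finset.Ico 1 N, c i := by
  rw [Finset.mul_sum]
  refine Finset.sum_le_sum fun i hi => ?_
  obtain ⟨hi₁, hiN⟩ := Finset.mem_Ico.1 hi
  have hmass : |v i t| * (x (i + 1) t - x i t) = v₀ i * (x₀ (i + 1) - x₀ i) := by
    rw [abs_of_nonneg (hsol.v_nonneg hx₀ hv₀nn hiN.le ht), hsol.mass i hi₁ hiN t ht]
    field_simp [(sub_pos.2 (hsol.gap_pos hx₀ hi₁ hiN ht)).ne']
  calc |v i t| * c i * (x (i + 1) t - x i t) = v₀ i * (x₀ (i + 1) - x₀ i) * c i := by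
        rw [← hmass]; ring
    _ ≤ vstar N v₀ * maxGap N x₀ * c i :=
        mul_le_mul_of_nonneg_right (mul_le_vstar_mul_maxGap hx₀ hv₀nn hi₁ hiN) (hc i)

end MassBounds

theorem flux_interpolation_error_general
    (f : ℝ → ℝ)
    (hf0 : f 0 = 0)
    (N : ℕ) (hN : 2 ≤ N) (x₀ v₀ : ℕ → ℝ)
    (hx₀ : ∀ i, 1 ≤ i → i < N → x₀ i < x₀ (i+1))
    (hv₀nn : ∀ i, 1 ≤ i → i < N → 0 ≤ v₀ i)
    (hv₀0 : v₀ 0 = 0) (hv₀N : v₀ N = 0)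
    (t' : ℝ) (x v : ℕ → ℝ → ℝ)
    (hsol : IsParticleSol f N x₀ v₀ t' x v)
    (hfdiff : Differentiable ℝ f) (L' : ℝ≥0) (hL' : LipschitzWith L' (deriv f))
    (w : ℝ → ℝ → ℝ)
    (hwl : ∀ t ∈ Set.Ico (0:ℝ) t', ∀ y, y < x 1 t → w y t = 0)
    (hwr : ∀ t ∈ Set.Ico (0:ℝ) t', ∀ y, x N t < y → w y t = 0)
    (hwmid : ∀ t ∈ Set.Ico (0:ℝ) t', ∀ i, 1 ≤ i → i < N →
      ∀ y ∈ Set.Ioo (x i t) (x (i+1) t), w y t = v i t)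
    (A : ℝ → ℝ → ℝ)
    (hAmid : ∀ t ∈ Set.Ico (0:ℝ) t', ∀ i, 1 ≤ i → i < N →
      ∀ y ∈ Set.Icc (x i t) (x (i+1) t),
        A y t = ((x (i+1) t - y) * pV f (v (i-1) t) (v i t)
          + (y - x i t) * pV f (v i t) (v (i+1) t)) / (x (i+1) t - x i t))
    :
    ∀ t ∈ Set.Ioo (0:ℝ) t',
      ∫ y, |A y t * w y t - f (w y t)| ≤
        (L' : ℝ) * vstar N v₀ * maxGap N x₀ *
          ∑ i ∈ Finset.range N, |v₀ (i+1) - v₀ i| := by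
  intro t ht
  have htI : t ∈ Ico 0 t' := Ioo_subset_Ico_self ht
  have hK := lipschitzWith_aF hfdiff hL' hf0
  set c : ℕ → ℝ := fun i => ↑(L' / 2) * (|v i t - v (i - 1) t| + |v (i + 1) t - v i t|)
  have hout : ∀ y, y < x 1 t ∨ x N t < y → |A y t * w y t - f (w y t)| = 0 := by
    rintro y (hy | hy)
    · simp [hwl t htI y hy, hf0]
    · simp [hwr t htI y hy, hf0]
  have hcell : ∀ i, 1 ≤ i → i < N → ∀ y ∈ Ioo (x i t) (x (i + 1) t),
      |A y t * w y t - f (w y t)| ≤ |v i t| * c i := fun i hi₁ hiN y hy => by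
    rw [hwmid t htI i hi₁ hiN y hy, hAmid t htI i hi₁ hiN y (Ioo_subset_Icc_self hy)]
    exact abs_interp_pV_mul_sub_le hK hf0 (hsol.order t ht i hi₁ hiN) (Ioo_subset_Icc_self hy)
  calc ∫ y, |A y t * w y t - f (w y t)|
      ≤ ∑ i ∈ Finset.Ico 1 N, |v i t| * c i * (x (i + 1) t - x i t) :=
        integral_le_sum_of_le_on_Ioo (by omega) (fun _ => abs_nonneg _)
          (fun i => hsol.order t ht i) hout hcell
    _ ≤ vstar N v₀ * maxGap N x₀ * ∑ i ∈ Finset.Ico 1 N, c i :=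
        hsol.sum_abs_mul_mul_gap_le hx₀ hv₀nn htI fun i => by positivity
    _ ≤ vstar N v₀ * maxGap N x₀ *
          (↑(L' / 2) * (2 * ∑ i ∈ Finset.range N, |v (i + 1) t - v i t|)) := by
        refine mul_le_mul_of_nonneg_left ?_ (vstar_mul_maxGap_nonneg hx₀ hv₀nn hN)
        rw [← Finset.mul_sum]
        gcongr
        exact sum_Ico_abs_sub_add_abs_sub_le N fun i => v i t
    _ = L' * vstar N v₀ * maxGap N x₀ * ∑ i ∈ Finset.range N, |v (i + 1) t - v i t| := by
        push_cast
        ring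
    _ ≤ L' * vstar N v₀ * maxGap N x₀ * ∑ i ∈ Finset.range N, |v₀ (i + 1) - v₀ i| :=
        mul_le_mul_of_nonneg_left (hsol.sum_abs_sub_le hx₀ hK.continuous hv₀nn hv₀0 hv₀N ht)
          (by rw [mul_assoc]; exact mul_nonneg L'.2 (vstar_mul_maxGap_nonneg hx₀ hv₀nn hN))

/-- **Flux interpolation error.** If `f` is differentiable with `f'` Lipschitz
with constant `[f']_Lip`, then for every `t ∈ (0, tʹ)`:
`∫ |A(x,t) v(x,t) − f(v(x,t))| dx ≤ [f']_Lip v₀* Δx₀* Σᵢ |v₀^{i+1} − v₀^i|`. -/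
theorem flux_interpolation_error
    (f : ℝ → ℝ) (K : ℝ≥0) (hf : LipschitzWith K f)
    (hf0 : f 0 = 0) (hfd : DifferentiableAt ℝ f 0)
    (N : ℕ) (hN : 2 ≤ N) (x₀ v₀ : ℕ → ℝ)
    (hx₀ : ∀ i, 1 ≤ i → i < N → x₀ i < x₀ (i+1))
    (hv₀nn : ∀ i, 1 ≤ i → i < N → 0 ≤ v₀ i)
    (hv₀0 : v₀ 0 = 0) (hv₀N : v₀ N = 0)
    (t' : ℝ) (ht' : 0 < t') (x v : ℕ → ℝ → ℝ)
    (hsol : IsParticleSol f N x₀ v₀ t' x v)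
    (hfdiff : Differentiable ℝ f) (L' : ℝ≥0) (hL' : LipschitzWith L' (deriv f))
    (w : ℝ → ℝ → ℝ)
    (hwl : ∀ t ∈ Set.Ico (0:ℝ) t', ∀ y, y < x 1 t → w y t = 0)
    (hwr : ∀ t ∈ Set.Ico (0:ℝ) t', ∀ y, x N t < y → w y t = 0)
    (hwmid : ∀ t ∈ Set.Ico (0:ℝ) t', ∀ i, 1 ≤ i → i < N →
      ∀ y ∈ Set.Ioo (x i t) (x (i+1) t), w y t = v i t)
    (A : ℝ → ℝ → ℝ)
    (hAl : ∀ t ∈ Set.Ico (0:ℝ) t', ∀ y, y ≤ x 1 t → A y t = pV f 0 (v 1 t))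
    (hAr : ∀ t ∈ Set.Ico (0:ℝ) t', ∀ y, x N t ≤ y → A y t = pV f (v (N-1) t) 0)
    (hAmid : ∀ t ∈ Set.Ico (0:ℝ) t', ∀ i, 1 ≤ i → i < N →
      ∀ y ∈ Set.Icc (x i t) (x (i+1) t),
        A y t = ((x (i+1) t - y) * pV f (v (i-1) t) (v i t)
          + (y - x i t) * pV f (v i t) (v (i+1) t)) / (x (i+1) t - x i t))
    :
    ∀ t ∈ Set.Ioo (0:ℝ) t',
      ∫ y, |A y t * w y t - f (w y t)| ≤
        (L' : ℝ) * vstar N v₀ * maxGap N x₀ *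
          ∑ i ∈ Finset.range N, |v₀ (i+1) - v₀ i| :=
  flux_interpolation_error_general f hf0 N hN x₀ v₀ hx₀ hv₀nn hv₀0 hv₀N t' x v hsol hfdiff L' hL' w
    hwl hwr hwmid A hAmid
end

section
/- (Forward flow for one-sided Lipschitz velocity fields.) Let T > 0 and let b : ℝ × [0, T] → ℝ be bounded, continuous, and one-sided Lipschitz in space with a uniform constant C ≥ 0, i.e. (b(x, t) − b(y, t))(x − y) ≤ C (x − y)² for all x, y ∈ ℝ and all t ∈ [0, T]. Then: (i) for every (x, s) ∈ ℝ × [0, T] there exists a unique continuously differentiable function t ↦ X_t(x, s) on [s, T] with X_s(x, s) = x and (d/dt) X_t(x, s) = b(X_t(x, s), t) for all t ∈ (s, T); (ii) the map (x, s, t) ↦ X_t(x, s) is Lipschitz on ℝ × {(s, t) : 0 ≤ s ≤ t ≤ T}; (iii) X_t(X_r(x, s), r) = X_t(x, s) for all 0 ≤ s ≤ r ≤ t ≤ T and all x ∈ ℝ. -/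
/-!
Regularize `b` by its Pasch–Hausdorff envelopes `bₙ(q) = inf_p (b(p) + n |q - p|)`: they are
Lipschitz, bounded like `b`, and converge to `b` uniformly on compact sets, so the
Picard–Lindelöf solutions of `ẋ = bₙ(x, t)` are approximate solutions of `ẋ = b(x, t)` with
defects tending to zero. For two approximate solutions the one-sided Lipschitz bound gives a
Grönwall inequality for the squared distance, so these solutions are uniformly Cauchy, and their
limit solves the integral equation of `b`. With zero defect the same inequality gives uniqueness
and Lipschitz dependence on the initial point; uniqueness gives the semigroup property, which in
turn converts a change of initial time into a change of initial point.
-/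

open MeasureTheory Set Filter
open scoped ENNReal NNReal
open Topology Real Function

-- Pasch–Hausdorff envelope: the largest `c`-Lipschitz minorant of `f` if `f` is bounded below
noncomputable def infConv {α : Type*} [PseudoMetricSpace α] (f : α → ℝ) (c : ℝ≥0) (a : α) : ℝ :=
  ⨅ p, f p + c * dist a p

section infConv

variable {α : Type*} [PseudoMetricSpace α] {f : α → ℝ} {m : ℝ}

lemma bddBelow_range_add_mul_dist (hm : ∀ a, m ≤ f a) (c : ℝ≥0) (a : α) :
    BddBelow (range fun p => f p + c * dist a p) :=
  ⟨m, forall_mem_range.2 fun p => le_add_of_le_of_nonneg (hm p) (by positivity)⟩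

lemma infConv_le (hm : ∀ a, m ≤ f a) (c : ℝ≥0) (a : α) : infConv f c a ≤ f a := by
  simpa [infConv] using ciInf_le (bddBelow_range_add_mul_dist hm c a) a

lemma le_infConv (hm : ∀ a, m ≤ f a) (c : ℝ≥0) (a : α) : m ≤ infConv f c a :=
  have : Nonempty α := ⟨a⟩
  le_ciInf fun p => le_add_of_le_of_nonneg (hm p) (by positivity)

lemma lipschitzWith_infConv (hm : ∀ a, m ≤ f a) (c : ℝ≥0) : LipschitzWith c (infConv f c) := by
  refine LipschitzWith.of_le_add_mul c fun a a' => ?_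
  have : Nonempty α := ⟨a⟩
  rw [← sub_le_iff_le_add]
  refine le_ciInf fun p => ?_
  calc infConv f c a - c * dist a a' ≤ f p + c * dist a p - c * dist a a' := by
        gcongr; exact ciInf_le (bddBelow_range_add_mul_dist hm c a) p
    _ ≤ f p + c * dist a' p := by
        have := mul_le_mul_of_nonneg_left (dist_triangle a a' p) c.coe_nonneg
        linarith [mul_add (c : ℝ) (dist a a') (dist a' p)]

lemma tendstoUniformlyOn_infConv (hm : ∀ a, m ≤ f a) (hf : Continuous f) {K : Set α}
    (hK : IsCompact K) : TendstoUniformlyOn (fun n : ℕ => infConv f n) f atTop K := by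
  rw [Metric.tendstoUniformlyOn_iff]
  intro ε hε
  obtain ⟨η, hη, hclose⟩ := Metric.mem_uniformity_dist.1 <|
    hK.uniformContinuousAt_of_continuousAt f (fun a _ => hf.continuousAt)
      (Metric.dist_mem_uniformity (half_pos hε))
  obtain ⟨B, hB⟩ := hK.exists_bound_of_continuousOn hf.continuousOn
  filter_upwards [tendsto_natCast_atTop_atTop.eventually_ge_atTop ((B - m) / η)] with n hn q hq
  have hinf : f q - ε / 2 ≤ infConv f n q := by
    have : Nonempty α := ⟨q⟩
    refine le_ciInf fun p => ?_
    push_cast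
    rcases lt_or_ge (dist q p) η with hqp | hqp
    · have : |f q - f p| < ε / 2 := hclose hqp hq
      rw [abs_lt] at this
      have : (0 : ℝ) ≤ n * dist q p := by positivity
      linarith
    · have hfq := (abs_le.1 (Real.norm_eq_abs _ ▸ hB q hq)).2
      have : B - m ≤ n * dist q p := by
        calc B - m ≤ n * η := (div_le_iff₀ hη).1 hn
          _ ≤ n * dist q p := by gcongr
      linarith [hm p]
  rw [Real.dist_eq, abs_lt]
  constructor <;> linarith [infConv_le hm n q]

end infConv

theorem exists_lipschitzWith_tendstoUniformlyOn {b : ℝ → ℝ → ℝ} {M : ℝ≥0}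
    (hM : ∀ x t, |b x t| ≤ M) (hb : Continuous (uncurry b)) :
    ∃ v : ℕ → ℝ → ℝ → ℝ, (∀ n, ∃ L, ∀ t, LipschitzWith L (v n · t)) ∧
      (∀ n, Continuous (uncurry (v n))) ∧ (∀ n x t, |v n x t| ≤ M) ∧
      ∀ K, IsCompact K → TendstoUniformlyOn (fun n => uncurry (v n)) (uncurry b) atTop K := by
  have hMb : ∀ q : ℝ × ℝ, -(M : ℝ) ≤ uncurry b q := fun q => (abs_le.1 (hM q.1 q.2)).1
  refine ⟨fun n x t => infConv (uncurry b) n (x, t), fun n => ⟨n, fun t => ?_⟩,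
    fun n => (lipschitzWith_infConv hMb n).continuous, fun n x t => ?_,
    fun K hK => tendstoUniformlyOn_infConv hMb hb hK⟩
  · exact ((lipschitzWith_infConv hMb n).comp (LipschitzWith.prodMk_right t)).weaken (mul_one _).le
  · exact abs_le.2 ⟨le_infConv hMb n _, (infConv_le hMb n _).trans (abs_le.1 (hM x t)).2⟩

theorem le_mul_exp_of_hasDerivAt_le {u : ℝ → ℝ} {a b K E : ℝ} (hK : 0 ≤ K) (hE : 0 ≤ E)
    (hab : a ≤ b) (hu : ContinuousOn u (Icc a b))
    (hu' : ∀ τ ∈ Ioo a b, ∃ u', HasDerivAt u u' τ ∧ u' ≤ K * u τ + E) :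
    u b ≤ (u a + E * (b - a)) * exp (K * (b - a)) := by
  set φ : ℝ → ℝ := fun τ => u τ * exp (-(K * (τ - a))) - E * (τ - a)
  have hφ : ∀ τ ∈ Ioo a b, ∃ φ', HasDerivAt φ φ' τ ∧ φ' ≤ 0 := by
    intro τ hτ
    obtain ⟨u', hu'τ, hle⟩ := hu' τ hτ
    have hexp : HasDerivAt (fun τ => exp (-(K * (τ - a)))) (exp (-(K * (τ - a))) * -(K * 1)) τ :=
      (((hasDerivAt_id τ).sub_const a).const_mul K).neg.exp
    refine ⟨_, (hu'τ.mul hexp).sub (((hasDerivAt_id τ).sub_const a).const_mul E), ?_⟩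
    have h1 : exp (-(K * (τ - a))) ≤ 1 := exp_le_one_iff.2 (by nlinarith [hτ.1])
    have h0 : 0 < exp (-(K * (τ - a))) := exp_pos _
    nlinarith
  have hanti : AntitoneOn φ (Icc a b) := by
    refine antitoneOn_of_deriv_nonpos (convex_Icc a b) ?_ ?_ ?_
    · exact (hu.mul (by fun_prop)).sub (by fun_prop)
    · rw [interior_Icc]
      intro τ hτ
      obtain ⟨φ', h, -⟩ := hφ τ hτ
      exact h.differentiableAt.differentiableWithinAt
    · rw [interior_Icc]
      intro τ hτ
      obtain ⟨φ', h, hle⟩ := hφ τ hτ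
      rwa [h.deriv]
  have key := hanti (left_mem_Icc.2 hab) (right_mem_Icc.2 hab) hab
  simp only [φ, sub_self, mul_zero, neg_zero, exp_zero, mul_one, sub_zero] at key
  have := mul_le_mul_of_nonneg_right (sub_le_iff_le_add.1 key) (exp_pos (K * (b - a))).le
  rwa [mul_assoc, ← exp_add, neg_add_cancel, exp_zero, mul_one] at this

def OneSidedLipschitzOn (v : ℝ → ℝ → ℝ) (C : ℝ) (I : Set ℝ) : Prop :=
  ∀ t ∈ I, ∀ p q, (v p t - v q t) * (p - q) ≤ C * (p - q) ^ 2

lemma OneSidedLipschitzOn.mono {v : ℝ → ℝ → ℝ} {C : ℝ} {I J : Set ℝ}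
    (h : OneSidedLipschitzOn v C I) (hJ : J ⊆ I) : OneSidedLipschitzOn v C J :=
  fun t ht => h t (hJ ht)

def IsApproxSolOn (v : ℝ → ℝ → ℝ) (δ a b : ℝ) (g : ℝ → ℝ) : Prop :=
  ContinuousOn g (Icc a b) ∧ ∀ τ ∈ Ioo a b, ∃ w, HasDerivAt g w τ ∧ |w - v (g τ) τ| ≤ δ

namespace IsApproxSolOn

variable {v : ℝ → ℝ → ℝ} {δ a b C : ℝ} {g g₁ g₂ : ℝ → ℝ}

lemma mono (h : IsApproxSolOn v δ a b g) {a' b' : ℝ} (ha : a ≤ a') (hb : b' ≤ b) :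
    IsApproxSolOn v δ a' b' g :=
  ⟨h.1.mono (Icc_subset_Icc ha hb), fun τ hτ => h.2 τ (Ioo_subset_Ioo ha hb hτ)⟩

lemma of_hasDerivWithinAt {w : ℝ → ℝ}
    (hg : ∀ t ∈ Icc a b, HasDerivWithinAt g (w t) (Icc a b) t)
    (hw : ∀ t ∈ Ioo a b, |w t - v (g t) t| ≤ δ) : IsApproxSolOn v δ a b g :=
  ⟨fun t ht => (hg t ht).continuousWithinAt, fun t ht =>
    ⟨w t, (hg t (Ioo_subset_Icc_self ht)).hasDerivAt (Icc_mem_nhds ht.1 ht.2), hw t ht⟩⟩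

theorem sq_sub_le (hC : 0 ≤ C) (hv : OneSidedLipschitzOn v C (Ioo a b))
    (h₁ : IsApproxSolOn v δ a b g₁) (h₂ : IsApproxSolOn v δ a b g₂) {t : ℝ} (ht : t ∈ Icc a b) :
    (g₁ t - g₂ t) ^ 2 ≤
      ((g₁ a - g₂ a) ^ 2 + 2 * δ ^ 2 * (t - a)) * exp (2 * (C + 1) * (t - a)) := by
  refine le_mul_exp_of_hasDerivAt_le (by positivity) (by positivity) ht.1
    (((h₁.1.sub h₂.1).pow 2).mono (Icc_subset_Icc_right ht.2)) fun τ hτ => ?_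
  have hτ' : τ ∈ Ioo a b := Ioo_subset_Ioo_right ht.2 hτ
  obtain ⟨w₁, hd₁, hw₁⟩ := h₁.2 τ hτ'
  obtain ⟨w₂, hd₂, hw₂⟩ := h₂.2 τ hτ'
  refine ⟨_, (hd₁.sub hd₂).pow 2, ?_⟩
  have hosl := hv τ hτ' (g₁ τ) (g₂ τ)
  simp only [Pi.sub_apply, Pi.pow_apply, Nat.cast_ofNat, Nat.add_one_sub_one, pow_one]
  set d := g₁ τ - g₂ τ
  -- `2 δ |d| ≤ d² + δ²` absorbs the two defects into the constant `C + 1`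
  have h₁ : d * (w₁ - v (g₁ τ) τ) ≤ |d| * δ :=
    (le_abs_self _).trans (abs_mul d _ ▸ mul_le_mul_of_nonneg_left hw₁ (abs_nonneg d))
  have h₂ : d * (v (g₂ τ) τ - w₂) ≤ |d| * δ :=
    (le_abs_self _).trans (abs_mul d _ ▸ abs_sub_comm w₂ _ ▸
      mul_le_mul_of_nonneg_left hw₂ (abs_nonneg d))
  have hamgm : 2 * (|d| * δ) ≤ d ^ 2 + δ ^ 2 := by
    nlinarith [sq_nonneg (|d| - δ), sq_abs d]
  nlinarith

theorem abs_sub_le (hC : 0 ≤ C) (hv : OneSidedLipschitzOn v C (Ioo a b))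
    (h₁ : IsApproxSolOn v 0 a b g₁) (h₂ : IsApproxSolOn v 0 a b g₂) {t : ℝ} (ht : t ∈ Icc a b) :
    |g₁ t - g₂ t| ≤ exp ((C + 1) * (t - a)) * |g₁ a - g₂ a| := by
  refine abs_le_of_sq_le_sq ?_ (by positivity)
  calc (g₁ t - g₂ t) ^ 2
      ≤ ((g₁ a - g₂ a) ^ 2 + 2 * 0 ^ 2 * (t - a)) * exp (2 * (C + 1) * (t - a)) :=
        h₁.sq_sub_le hC hv h₂ ht
    _ = (exp ((C + 1) * (t - a)) * |g₁ a - g₂ a|) ^ 2 := by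
        rw [mul_pow, sq_abs, ← exp_nat_mul]; push_cast; ring_nf

theorem eqOn (hC : 0 ≤ C) (hv : OneSidedLipschitzOn v C (Ioo a b))
    (h₁ : IsApproxSolOn v 0 a b g₁) (h₂ : IsApproxSolOn v 0 a b g₂) (ha : g₁ a = g₂ a) :
    EqOn g₁ g₂ (Icc a b) := fun t ht =>
  sub_eq_zero.1 <| abs_nonpos_iff.1 <| (h₁.abs_sub_le hC hv h₂ ht).trans_eq (by simp [ha])

end IsApproxSolOn

lemma lipschitzOnWith_of_hasDerivWithinAt {v : ℝ → ℝ → ℝ} {M : ℝ≥0} (hM : ∀ x t, |v x t| ≤ M)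
    {g : ℝ → ℝ} {s T : ℝ} (hg : ∀ t ∈ Icc s T, HasDerivWithinAt g (v (g t) t) (Icc s T) t) :
    LipschitzOnWith M g (Icc s T) :=
  (convex_Icc s T).lipschitzOnWith_of_nnnorm_hasDerivWithin_le hg fun t _ => by
    rw [← NNReal.coe_le_coe, coe_nnnorm, Real.norm_eq_abs]; exact hM _ _

theorem exists_hasDerivWithinAt_of_lipschitzWith {v : ℝ → ℝ → ℝ} {L M : ℝ≥0}
    (hlip : ∀ t, LipschitzWith L (v · t)) (hv : Continuous (uncurry v))
    (hM : ∀ x t, |v x t| ≤ M) {s T : ℝ} (hsT : s ≤ T) (x₀ : ℝ) :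
    ∃ α : ℝ → ℝ, α s = x₀ ∧ ∀ t ∈ Icc s T, HasDerivWithinAt α (v (α t) t) (Icc s T) t :=
  IsPicardLindelof.exists_eq_forall_mem_Icc_hasDerivWithinAt₀ (f := fun t x => v x t)
    (tmin := s) (tmax := T) (t₀ := ⟨s, left_mem_Icc.2 hsT⟩) (x₀ := x₀)
    (a := M * (T - s).toNNReal) (L := M) (K := L)
    { lipschitzOnWith := fun t _ => (hlip t).lipschitzOnWith
      continuousOn := fun x _ => (hv.comp (Continuous.prodMk_right x)).continuousOn
      norm_le := fun t _ x _ => (Real.norm_eq_abs _).trans_le (hM x t)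
      mul_max_le := by simp [hsT] }

theorem uniformCauchySeqOn_of_isApproxSolOn {v : ℝ → ℝ → ℝ} {C a b x : ℝ} {g : ℕ → ℝ → ℝ}
    (hC : 0 ≤ C) (hv : OneSidedLipschitzOn v C (Ioo a b)) (hg₀ : ∀ n, g n a = x)
    (hg : ∀ δ > 0, ∀ᶠ n in atTop, IsApproxSolOn v δ a b (g n)) :
    UniformCauchySeqOn g atTop (Icc a b) := by
  rw [Metric.uniformCauchySeqOn_iff]
  intro ε hε
  set A := 2 * |b - a| * exp (2 * (C + 1) * |b - a|)
  have hA : 0 ≤ A := by positivity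
  set δ := ε / (A + 1)
  have hδ : 0 < δ := by positivity
  have hδA : δ ^ 2 * A < ε ^ 2 := by
    have : δ * (A + 1) = ε := div_mul_cancel₀ _ (by positivity)
    nlinarith
  obtain ⟨N, hN⟩ := eventually_atTop.1 (hg δ hδ)
  refine ⟨N, fun m hm n hn t ht => ?_⟩
  have hsq := (hN m hm).sq_sub_le hC hv (hN n hn) ht
  rw [hg₀, hg₀, sub_self] at hsq
  refine Real.dist_eq _ _ ▸ abs_lt_of_sq_lt_sq (hsq.trans_lt ?_) hε.le
  have hta : 0 ≤ t - a := sub_nonneg.2 ht.1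
  have htb : t - a ≤ |b - a| := (sub_le_sub_right ht.2 a).trans (le_abs_self _)
  have hC1 : 0 ≤ C + 1 := by linarith
  calc (0 ^ 2 + 2 * δ ^ 2 * (t - a)) * exp (2 * (C + 1) * (t - a))
      = δ ^ 2 * (2 * (t - a) * exp (2 * (C + 1) * (t - a))) := by ring
    _ ≤ δ ^ 2 * A := by simp only [A]; gcongr
    _ < ε ^ 2 := hδA

theorem hasDerivWithinAt_of_tendstoUniformlyOn {v : ℕ → ℝ → ℝ → ℝ} {b : ℝ → ℝ → ℝ}
    {g : ℕ → ℝ → ℝ} {α : ℝ → ℝ} {K : Set (ℝ × ℝ)} {s T M : ℝ}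
    (hb : Continuous (uncurry b)) (hv : ∀ n, Continuous (uncurry (v n)))
    (hvM : ∀ n x t, |v n x t| ≤ M)
    (hvb : TendstoUniformlyOn (fun n => uncurry (v n)) (uncurry b) atTop K)
    (hg : ∀ n, ∀ t ∈ Icc s T, HasDerivWithinAt (g n) (v n (g n t) t) (Icc s T) t)
    (hgK : ∀ n, ∀ t ∈ Icc s T, (g n t, t) ∈ K) (hgα : TendstoUniformlyOn g α atTop (Icc s T)) :
    ∀ t ∈ Icc s T, HasDerivWithinAt α (b (α t) t) (Icc s T) t := by
  have hgc : ∀ n, ContinuousOn (g n) (Icc s T) := fun n => HasDerivWithinAt.continuousOn (hg n)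
  have hα : ContinuousOn α (Icc s T) := hgα.continuousOn (Frequently.of_forall hgc)
  have hb' : ContinuousOn (uncurry fun t x => b x t) (Icc s T ×ˢ univ) :=
    (hb.comp continuous_swap).continuousOn
  have hpicard : ∀ t ∈ Icc s T, ODE.picard (fun t x => b x t) s (α s) α t = α t := by
    intro t ht
    have hsub : uIcc s t ⊆ Icc s T := uIcc_subset_Icc (left_mem_Icc.2 (ht.1.trans ht.2)) ht
    have hgn : ∀ n, ODE.picard (fun t x => v n x t) s (g n s) (g n) t = g n t := fun n =>
      ODE.picard_eq_of_hasDerivAt (u := univ) ((hv n).comp continuous_swap).continuousOn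
        (fun t' ht' => (hg n t' (hsub ht')).mono hsub) (mapsTo_univ _ _)
    refine tendsto_nhds_unique ?_ (hgα.tendsto_at ht)
    simp only [← hgn, ODE.picard_apply]
    refine (hgα.tendsto_at (left_mem_Icc.2 (ht.1.trans ht.2))).add ?_
    refine intervalIntegral.tendsto_integral_filter_of_dominated_convergence (fun _ => M)
      (Eventually.of_forall fun n => ?_) (Eventually.of_forall fun n => ?_)
      intervalIntegrable_const (ae_of_all _ fun τ hτ => ?_)
    · exact (((hv n).comp_continuousOn ((hgc n).prodMk continuousOn_id)).mono
        (uIoc_subset_uIcc.trans hsub)).aestronglyMeasurable measurableSet_uIoc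
    · exact ae_of_all _ fun τ _ => (Real.norm_eq_abs _).trans_le (hvM n _ _)
    · have hτ' : τ ∈ Icc s T := hsub (uIoc_subset_uIcc hτ)
      exact hvb.tendsto_comp hb.continuousWithinAt (tendsto_nhdsWithin_iff.2
        ⟨(hgα.tendsto_at hτ').prodMk_nhds tendsto_const_nhds, Eventually.of_forall (hgK · τ hτ')⟩)
  intro t ht
  exact (ODE.hasDerivWithinAt_picard_Icc (left_mem_Icc.2 (ht.1.trans ht.2)) hb' hα
    (fun _ _ => mem_univ _) (α s) ht).congr_of_mem (fun t ht => (hpicard t ht).symm) ht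

theorem exists_hasDerivWithinAt_of_oneSidedLipschitzOn {b : ℝ → ℝ → ℝ} {M : ℝ≥0} {C s T : ℝ}
    (hM : ∀ x t, |b x t| ≤ M) (hb : Continuous (uncurry b)) (hC : 0 ≤ C)
    (hosl : OneSidedLipschitzOn b C (Ioo s T)) (hsT : s ≤ T) (x : ℝ) :
    ∃ α : ℝ → ℝ, α s = x ∧ ∀ t ∈ Icc s T, HasDerivWithinAt α (b (α t) t) (Icc s T) t := by
  obtain ⟨v, hv_lip, hv_cont, hvM, hvb⟩ := exists_lipschitzWith_tendstoUniformlyOn hM hb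
  choose g hg₀ hg using fun n =>
    exists_hasDerivWithinAt_of_lipschitzWith (hv_lip n).choose_spec (hv_cont n) (hvM n) hsT x
  set K := Metric.closedBall x (M * (T - s)) ×ˢ Icc s T
  have hgK : ∀ n, ∀ t ∈ Icc s T, (g n t, t) ∈ K := fun n t ht => by
    refine ⟨?_, ht⟩
    have := (lipschitzOnWith_of_hasDerivWithinAt (hvM n) (hg n)).dist_le_mul t ht s
      (left_mem_Icc.2 hsT)
    rw [hg₀, Real.dist_eq, Real.dist_eq, abs_of_nonneg (sub_nonneg.2 ht.1)] at this
    rw [Metric.mem_closedBall, Real.dist_eq]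
    nlinarith [ht.2, M.coe_nonneg]
  have hvK := hvb K ((isCompact_closedBall _ _).prod isCompact_Icc)
  have happrox : ∀ δ > 0, ∀ᶠ n in atTop, IsApproxSolOn b δ s T (g n) := by
    intro δ hδ
    filter_upwards [Metric.tendstoUniformlyOn_iff.1 hvK δ hδ] with n hn
    refine IsApproxSolOn.of_hasDerivWithinAt (hg n) fun t ht => ?_
    have := hn _ (hgK n t (Ioo_subset_Icc_self ht))
    rw [Real.dist_eq, abs_sub_comm] at this
    exact this.le
  have hcauchy := uniformCauchySeqOn_of_isApproxSolOn hC hosl hg₀ happrox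
  set α := fun t => limUnder atTop (g · t)
  have hlim : ∀ t ∈ Icc s T, Tendsto (g · t) atTop (𝓝 (α t)) := fun t ht =>
    (hcauchy.cauchySeq ht).tendsto_limUnder
  refine ⟨α, tendsto_nhds_unique (hlim s (left_mem_Icc.2 hsT)) ?_,
    hasDerivWithinAt_of_tendstoUniformlyOn hb hv_cont hvM hvK hg hgK
      (hcauchy.tendstoUniformlyOn_of_tendsto hlim)⟩
  simp only [hg₀, tendsto_const_nhds]

lemma dist_max_le_of_le {s s' t t' : ℝ} (hst : s ≤ t) (hs't' : s' ≤ t') :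
    dist t (max t s') ≤ dist s' s ∧ dist (max t s') t' ≤ dist t t' := by
  simp only [Real.dist_eq]
  rcases le_total t s' with h | h
  · rw [max_eq_right h, abs_of_nonpos (by linarith), abs_of_nonneg (by linarith),
      abs_of_nonpos (by linarith), abs_of_nonpos (by linarith)]
    constructor <;> linarith
  · rw [max_eq_left h, sub_self, abs_zero]
    exact ⟨abs_nonneg _, le_rfl⟩

theorem lipschitzOnWith_of_flow {X : ℝ → ℝ → ℝ → ℝ} {T : ℝ} {M L : ℝ≥0}
    (hinit : ∀ x s, 0 ≤ s → s ≤ T → X x s s = x)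
    (htime : ∀ x s, 0 ≤ s → s ≤ T → LipschitzOnWith M (X x s) (Icc s T))
    (hspace : ∀ s t, 0 ≤ s → s ≤ t → t ≤ T → LipschitzWith L (X · s t))
    (hsemi : ∀ x s r t, 0 ≤ s → s ≤ r → r ≤ t → t ≤ T → X (X x s r) r t = X x s t) :
    LipschitzOnWith (2 * M + L * (M + 1)) (fun p : ℝ × ℝ × ℝ => X p.1 p.2.1 p.2.2)
      {p | 0 ≤ p.2.1 ∧ p.2.1 ≤ p.2.2 ∧ p.2.2 ≤ T} := by
  refine LipschitzOnWith.of_dist_le_mul fun p hp q hq => ?_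
  wlog hpq : p.2.1 ≤ q.2.1 generalizing p q
  · rw [dist_comm, dist_comm p]
    exact this q hq p hp (le_of_not_ge hpq)
  obtain ⟨x, s, t⟩ := p
  obtain ⟨y, s', t'⟩ := q
  obtain ⟨hs, hst, htT⟩ := hp
  obtain ⟨hs', hst', ht'T⟩ := hq
  dsimp only at hs hst htT hs' hst' ht'T hpq ⊢
  have hsT : s ≤ T := hst.trans htT
  have hs'T : s' ≤ T := hst'.trans ht'T
  set D := dist (x, s, t) (y, s', t')
  have hD : D = max (dist x y) (max (dist s s') (dist t t')) := by simp only [D, Prod.dist_eq]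
  have hx : dist x y ≤ D := hD ▸ le_max_left _ _
  have hss : dist s' s ≤ D := hD ▸ dist_comm s s' ▸ (le_max_left _ _).trans (le_max_right _ _)
  have htt : dist t t' ≤ D := hD ▸ (le_max_right _ _).trans (le_max_right _ _)
  -- compare both trajectories at the time `τ ≥ s'`, where the one from `s` restarts at `s'`
  obtain ⟨hτ₁, hτ₂⟩ := dist_max_le_of_le hst hst'
  set τ := max t s'
  have hτ : s' ≤ τ ∧ τ ≤ T := ⟨le_max_right _ _, max_le htT hs'T⟩
  have hz : dist (X x s s') y ≤ M * D + D :=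
    calc dist (X x s s') y ≤ dist (X x s s') (X x s s) + dist x y := by
          rw [hinit x s hs hsT]; exact dist_triangle _ _ _
      _ ≤ M * dist s' s + D := by
          gcongr
          exact (htime x s hs hsT).dist_le_mul _ ⟨hpq, hs'T⟩ _ ⟨le_rfl, hsT⟩
      _ ≤ M * D + D := by gcongr
  calc dist (X x s t) (X y s' t')
      ≤ dist (X x s t) (X x s τ) + dist (X (X x s s') s' τ) (X y s' τ)
          + dist (X y s' τ) (X y s' t') := by
        rw [hsemi x s s' τ hs hpq hτ.1 hτ.2]
        exact dist_triangle4 _ _ _ _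
    _ ≤ M * D + L * (M * D + D) + M * D := by
        gcongr
        · exact ((htime x s hs hsT).dist_le_mul _ ⟨hst, htT⟩ _
            ⟨hpq.trans hτ.1, hτ.2⟩).trans (by gcongr; exact hτ₁.trans hss)
        · exact ((hspace s' τ hs' hτ.1 hτ.2).dist_le_mul _ _).trans (by gcongr)
        · exact ((htime y s' hs' hs'T).dist_le_mul _ hτ _ ⟨hst', ht'T⟩).trans
            (by gcongr; exact hτ₂.trans htt)
    _ = ↑(2 * M + L * (M + 1)) * D := by push_cast; ring

def IsFlowOn (b : ℝ → ℝ → ℝ) (T : ℝ) (X : ℝ → ℝ → ℝ → ℝ) : Prop :=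
  ∀ x s, s ∈ Icc 0 T →
    X x s s = x ∧ ∀ t ∈ Icc s T, HasDerivWithinAt (X x s) (b (X x s t) t) (Icc s T) t

namespace IsFlowOn

variable {b : ℝ → ℝ → ℝ} {C T : ℝ} {X : ℝ → ℝ → ℝ → ℝ}

theorem exists_of_oneSidedLipschitzOn {M : ℝ≥0} (hM : ∀ x t, |b x t| ≤ M)
    (hb : Continuous (uncurry b)) (hC : 0 ≤ C) (hosl : OneSidedLipschitzOn b C (Icc 0 T)) :
    ∃ X, IsFlowOn b T X := by
  have hsol : ∀ x s, ∃ α : ℝ → ℝ, s ∈ Icc 0 T →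
      α s = x ∧ ∀ t ∈ Icc s T, HasDerivWithinAt α (b (α t) t) (Icc s T) t := by
    intro x s
    by_cases hs : s ∈ Icc 0 T
    · obtain ⟨α, hα⟩ := exists_hasDerivWithinAt_of_oneSidedLipschitzOn hM hb hC
        (hosl.mono (Ioo_subset_Icc_self.trans (Icc_subset_Icc_left hs.1))) hs.2 x
      exact ⟨α, fun _ => hα⟩
    · exact ⟨id, fun h => absurd h hs⟩
  choose X hX using hsol
  exact ⟨X, hX⟩

lemma isApproxSolOn (hX : IsFlowOn b T X) {x s : ℝ} (hs : s ∈ Icc 0 T) :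
    IsApproxSolOn b 0 s T (X x s) :=
  .of_hasDerivWithinAt (hX x s hs).2 (by simp)

theorem eqOn (hX : IsFlowOn b T X) (hC : 0 ≤ C) (hosl : OneSidedLipschitzOn b C (Icc 0 T))
    {x s : ℝ} (hs : s ∈ Icc 0 T) {g : ℝ → ℝ} (hg : IsApproxSolOn b 0 s T g) (hgs : g s = x) :
    EqOn g (X x s) (Icc s T) :=
  hg.eqOn hC (hosl.mono (Ioo_subset_Icc_self.trans (Icc_subset_Icc_left hs.1)))
    (hX.isApproxSolOn hs) (hgs.trans (hX x s hs).1.symm)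

theorem semigroup (hX : IsFlowOn b T X) (hC : 0 ≤ C)
    (hosl : OneSidedLipschitzOn b C (Icc 0 T)) {x s r t : ℝ} (hs : 0 ≤ s) (hsr : s ≤ r)
    (hrt : r ≤ t) (htT : t ≤ T) : X (X x s r) r t = X x s t :=
  (hX.eqOn hC hosl ⟨hs.trans hsr, hrt.trans htT⟩
    ((hX.isApproxSolOn ⟨hs, hsr.trans (hrt.trans htT)⟩).mono hsr le_rfl) rfl ⟨hrt, htT⟩).symm

theorem lipschitzWith (hX : IsFlowOn b T X) (hC : 0 ≤ C)
    (hosl : OneSidedLipschitzOn b C (Icc 0 T)) {s t : ℝ} (hs : 0 ≤ s) (hst : s ≤ t)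
    (htT : t ≤ T) : LipschitzWith ⟨exp ((C + 1) * T), (exp_pos _).le⟩ (X · s t) := by
  have hsT : s ∈ Icc 0 T := ⟨hs, hst.trans htT⟩
  refine LipschitzWith.of_dist_le_mul fun x y => ?_
  have := (hX.isApproxSolOn (x := x) hsT).abs_sub_le hC
    (hosl.mono (Ioo_subset_Icc_self.trans (Icc_subset_Icc_left hs)))
    (hX.isApproxSolOn (x := y) hsT) ⟨hst, htT⟩
  rw [(hX x s hsT).1, (hX y s hsT).1] at this
  refine this.trans (mul_le_mul_of_nonneg_right (exp_le_exp.2 ?_) (abs_nonneg _))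
  nlinarith

end IsFlowOn

theorem forward_flow_general
    (T : ℝ) (b : ℝ → ℝ → ℝ)
    (hbbdd : ∃ M, ∀ z t, |b z t| ≤ M)
    (hbcont : Continuous fun p : ℝ × ℝ => b p.1 p.2)
    (C : ℝ) (hC : 0 ≤ C)
    (hosl : ∀ t ∈ Set.Icc (0:ℝ) T, ∀ p q : ℝ,
      (b p t - b q t) * (p - q) ≤ C * (p - q) ^ 2) :
    ∃ X : ℝ → ℝ → ℝ → ℝ,  -- `X x s t` is the flow `X_t(x, s)`
      -- (i) existence and uniqueness of the C¹ solution through `(x, s)`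
      (∀ x s, s ∈ Set.Icc (0:ℝ) T →
        X x s s = x ∧
        (∀ t ∈ Set.Icc s T, HasDerivWithinAt (X x s) (b (X x s t) t) (Set.Icc s T) t) ∧
        (∀ g : ℝ → ℝ, ContinuousOn g (Set.Icc s T) → g s = x →
          (∀ t ∈ Set.Ioo s T, HasDerivAt g (b (g t) t) t) →
          ∀ t ∈ Set.Icc s T, g t = X x s t)) ∧
      -- (ii) joint Lipschitz continuity on `{0 ≤ s ≤ t ≤ T}`
      (∃ K : ℝ≥0, LipschitzOnWith K (fun p : ℝ × ℝ × ℝ => X p.1 p.2.1 p.2.2)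
        {p : ℝ × ℝ × ℝ | 0 ≤ p.2.1 ∧ p.2.1 ≤ p.2.2 ∧ p.2.2 ≤ T}) ∧
      -- (iii) semigroup property
      (∀ x s r t, 0 ≤ s → s ≤ r → r ≤ t → t ≤ T →
        X (X x s r) r t = X x s t) := by
  obtain ⟨M, hM⟩ := hbbdd
  have hM' : ∀ x t, |b x t| ≤ M.toNNReal := fun x t => (hM x t).trans (Real.le_coe_toNNReal M)
  obtain ⟨X, hX⟩ := IsFlowOn.exists_of_oneSidedLipschitzOn hM' hbcont hC hosl
  refine ⟨X, fun x s hs => ⟨(hX x s hs).1, (hX x s hs).2, fun g hgc hgs hgd => ?_⟩, ?_,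
    fun x s r t hs hsr hrt htT => hX.semigroup hC hosl hs hsr hrt htT⟩
  · exact hX.eqOn hC hosl hs ⟨hgc, fun t ht => ⟨_, hgd t ht, by simp⟩⟩ hgs
  · exact ⟨_, lipschitzOnWith_of_flow (fun x s hs hsT => (hX x s ⟨hs, hsT⟩).1)
      (fun x s hs hsT => lipschitzOnWith_of_hasDerivWithinAt hM' (hX x s ⟨hs, hsT⟩).2)
      (fun s t hs hst htT => hX.lipschitzWith hC hosl hs hst htT)
      (fun x s r t hs hsr hrt htT => hX.semigroup hC hosl hs hsr hrt htT)⟩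

/-- **Forward flow for one-sided Lipschitz velocity fields.** If
`b : ℝ × [0,T] → ℝ` is bounded, continuous and one-sided Lipschitz in space with a uniform
constant, then it generates a unique forward flow `X`: (i) for each `(x, s)` the map
`t ↦ X_t(x,s)` is the unique C¹ solution of `ẋ = b(x,t)` on `[s,T]` with `X_s(x,s) = x`;
(ii) `(x,s,t) ↦ X_t(x,s)` is Lipschitz on `{0 ≤ s ≤ t ≤ T}`; (iii) the semigroup property
`X_t(X_r(x,s), r) = X_t(x,s)` holds for `0 ≤ s ≤ r ≤ t ≤ T`. -/
theorem forward_flow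
    (T : ℝ) (hT : 0 < T) (b : ℝ → ℝ → ℝ)
    (hbbdd : ∃ M, ∀ z t, |b z t| ≤ M)
    (hbcont : Continuous fun p : ℝ × ℝ => b p.1 p.2)
    (C : ℝ) (hC : 0 ≤ C)
    (hosl : ∀ t ∈ Set.Icc (0:ℝ) T, ∀ p q : ℝ,
      (b p t - b q t) * (p - q) ≤ C * (p - q) ^ 2) :
    ∃ X : ℝ → ℝ → ℝ → ℝ,  -- `X x s t` is the flow `X_t(x, s)`
      -- (i) existence and uniqueness of the C¹ solution through `(x, s)`
      (∀ x s, s ∈ Set.Icc (0:ℝ) T →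
        X x s s = x ∧
        (∀ t ∈ Set.Icc s T, HasDerivWithinAt (X x s) (b (X x s t) t) (Set.Icc s T) t) ∧
        (∀ g : ℝ → ℝ, ContinuousOn g (Set.Icc s T) → g s = x →
          (∀ t ∈ Set.Ioo s T, HasDerivAt g (b (g t) t) t) →
          ∀ t ∈ Set.Icc s T, g t = X x s t)) ∧
      -- (ii) joint Lipschitz continuity on `{0 ≤ s ≤ t ≤ T}`
      (∃ K : ℝ≥0, LipschitzOnWith K (fun p : ℝ × ℝ × ℝ => X p.1 p.2.1 p.2.2)
        {p : ℝ × ℝ × ℝ | 0 ≤ p.2.1 ∧ p.2.1 ≤ p.2.2 ∧ p.2.2 ≤ T}) ∧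
      -- (iii) semigroup property
      (∀ x s r t, 0 ≤ s → s ≤ r → r ≤ t → t ≤ T →
        X (X x s r) r t = X x s t) :=
  forward_flow_general T b hbbdd hbcont C hC hosl
end
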